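/- arXiv:1512.05015 — 4 statements merged into one kernel-verified Lean document; each statement's English description precedes it below -/
import Mathlib

section
/- For a real random variable ξ in L² with cumulative distribution function F and α ∈ (0,1), the infimum over y ∈ ℝ of E[y + (1-α)⁻¹(ξ - y)⁺] is attained at y = VaR_α(ξ) := inf{x : F(x) ≥ α}, provided the distribution of ξ has no atoms. -/
/-!
Write `q = VaR_α(ξ)`. Pointwise `(x - y)⁺ ≥ (x - q)⁺ + (q - y) 𝟙{x > q}`, so
`E(ξ - y)⁺ ≥ E(ξ - q)⁺ + (q - y) P(ξ > q)`. Right-continuity of the cdf `F` gives `F q ≥ α`, and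
`F x < α` for `x < q` gives `F(q-) ≤ α`; without atoms `F(q-) = F q`, hence `P(ξ > q) = 1 - α`,
and dividing by `1 - α` yields the claim. All quantities depend only on the law of `ξ`, so the
argument is carried out for the image measure on `ℝ`.
-/

open MeasureTheory Filter Topology Set ProbabilityTheory

namespace StieltjesFunction

variable (f : StieltjesFunction ℝ) {α : ℝ}

theorem le_apply_sInf_setOf_le (hne : {x | α ≤ f x}.Nonempty) :
    α ≤ f (sInf {x | α ≤ f x}) := by
  set q := sInf {x | α ≤ f x}
  have h_above : ∀ᶠ x in 𝓝[>] q, α ≤ f x := by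
    filter_upwards [self_mem_nhdsWithin] with x hx
    obtain ⟨z, hz, hzx⟩ := exists_lt_of_csInf_lt hne hx
    exact hz.trans (f.mono hzx.le)
  exact ge_of_tendsto ((f.right_continuous q).mono Ioi_subset_Ici_self) h_above

theorem leftLim_sInf_setOf_le_le (hbdd : BddBelow {x | α ≤ f x}) :
    Function.leftLim f (sInf {x | α ≤ f x}) ≤ α := by
  set q := sInf {x | α ≤ f x}
  have h_below : ∀ᶠ x in 𝓝[<] q, f x ≤ α := by
    filter_upwards [self_mem_nhdsWithin] with x hx
    by_contra! h
    exact (csInf_le hbdd h.le).not_gt hx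
  exact le_of_tendsto (f.mono.tendsto_leftLim q) h_below

theorem apply_sInf_setOf_le_eq (hne : {x | α ≤ f x}.Nonempty) (hbdd : BddBelow {x | α ≤ f x})
    (hatom : f.measure {sInf {x | α ≤ f x}} = 0) :
    f (sInf {x | α ≤ f x}) = α := by
  refine le_antisymm ?_ (f.le_apply_sInf_setOf_le hne)
  rw [measure_singleton, ENNReal.ofReal_eq_zero, sub_nonpos] at hatom
  exact hatom.trans (f.leftLim_sInf_setOf_le_le hbdd)

end StieltjesFunction

namespace ProbabilityTheory

variable {μ : Measure ℝ} {α : ℝ}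

theorem nonempty_setOf_le_cdf (hα : α < 1) : {x | α ≤ cdf μ x}.Nonempty :=
  ((tendsto_cdf_atTop μ).eventually_const_le hα).exists

theorem bddBelow_setOf_le_cdf (hα : 0 < α) : BddBelow {x | α ≤ cdf μ x} := by
  obtain ⟨a, ha⟩ := eventually_atBot.mp ((tendsto_cdf_atBot μ).eventually_lt_const hα)
  refine ⟨a, fun x hx => ?_⟩
  by_contra! hxa
  exact (ha x hxa.le).not_ge hx

theorem cdf_sInf_setOf_le_cdf_eq [IsProbabilityMeasure μ] (hatom : ∀ x, μ {x} = 0)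
    (hα : α ∈ Ioo 0 1) :
    cdf μ (sInf {x | α ≤ cdf μ x}) = α :=
  (cdf μ).apply_sInf_setOf_le_eq (nonempty_setOf_le_cdf hα.2) (bddBelow_setOf_le_cdf hα.1)
    (by rw [measure_cdf]; exact hatom _)

end ProbabilityTheory

theorem max_sub_add_indicator_le (q y x : ℝ) :
    max (x - q) 0 + (Ioi q).indicator (fun _ => q - y) x ≤ max (x - y) 0 := by
  rcases lt_or_ge q x with hx | hx
  · rw [indicator_of_mem (mem_Ioi.2 hx), max_eq_left (by linarith)]
    linarith [le_max_left (x - y) 0]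
  · rw [indicator_of_notMem (notMem_Ioi.2 hx), max_eq_right (by linarith), add_zero]
    exact le_max_right _ _

section

variable {μ : Measure ℝ} [IsFiniteMeasure μ]

theorem integrable_max_sub_zero (hμ : Integrable id μ) (z : ℝ) :
    Integrable (fun x => max (x - z) 0) μ :=
  (hμ.sub (integrable_const z)).pos_part

theorem integral_max_sub_add_le (hμ : Integrable id μ) (q y : ℝ) :
    ∫ x, max (x - q) 0 ∂μ + (q - y) * μ.real (Ioi q) ≤ ∫ x, max (x - y) 0 ∂μ := by
  have hind : Integrable ((Ioi q).indicator fun _ => q - y) μ :=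
    (integrable_const _).indicator measurableSet_Ioi
  have := integral_mono (f := fun x => max (x - q) 0 + (Ioi q).indicator (fun _ => q - y) x)
    ((integrable_max_sub_zero hμ q).add hind) (integrable_max_sub_zero hμ y)
    (max_sub_add_indicator_le q y)
  rwa [integral_add (integrable_max_sub_zero hμ q) hind,
    integral_indicator_const _ measurableSet_Ioi, smul_eq_mul, mul_comm] at this

end

/-- The Rockafellar–Uryasev function `y ↦ E[y + (1-α)⁻¹ (X - y)⁺]` of the law `μ` of `X`;
its minimum value is `CVaR_α(X)`. -/
noncomputable def cvarObjective (μ : Measure ℝ) (α y : ℝ) : ℝ :=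
  ∫ x, (y + (1 - α)⁻¹ * max (x - y) 0) ∂μ

theorem cvarObjective_eq {μ : Measure ℝ} [IsProbabilityMeasure μ] (hμ : Integrable id μ)
    (α y : ℝ) : cvarObjective μ α y = y + (1 - α)⁻¹ * ∫ x, max (x - y) 0 ∂μ := by
  rw [cvarObjective, integral_add (integrable_const y)
    ((integrable_max_sub_zero hμ y).const_mul _), integral_const_mul]
  simp

theorem cvarObjective_le_of_cdf_eq {μ : Measure ℝ} [IsProbabilityMeasure μ]
    (hμ : Integrable id μ) {α q : ℝ} (hα : α < 1) (hq : cdf μ q = α) (y : ℝ) :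
    cvarObjective μ α q ≤ cvarObjective μ α y := by
  have htail : μ.real (Ioi q) = 1 - α := by
    rw [← compl_Iic, probReal_compl_eq_one_sub measurableSet_Iic, ← cdf_eq_real, hq]
  have hkey := integral_max_sub_add_le hμ q y
  rw [htail] at hkey
  rw [cvarObjective_eq hμ, cvarObjective_eq hμ]
  have h1α : 0 < 1 - α := by linarith
  calc q + (1 - α)⁻¹ * ∫ x, max (x - q) 0 ∂μ
      = y + (1 - α)⁻¹ * (∫ x, max (x - q) 0 ∂μ + (q - y) * (1 - α)) := by
        field_simp; ring
    _ ≤ y + (1 - α)⁻¹ * ∫ x, max (x - y) 0 ∂μ := by gcongr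

/-- For a square-integrable real random variable ξ with atomless law and α ∈ (0,1),
the infimum over y of E[y + (1-α)⁻¹ (ξ - y)⁺] is attained at y = VaR_α(ξ). -/
theorem stmt_0 {Ω : Type*} [MeasurableSpace Ω] (P : Measure Ω) [IsProbabilityMeasure P]
    (ξ : Ω → ℝ) (hξ : MemLp ξ 2 P)
    (hatomless : ∀ x : ℝ, P {ω | ξ ω = x} = 0)
    (α : ℝ) (hα : α ∈ Set.Ioo (0 : ℝ) 1) :
    ∀ y : ℝ,
      (∫ ω, (sInf {x : ℝ | α ≤ (P {ω' | ξ ω' ≤ x}).toReal}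
          + (1 - α)⁻¹ * max (ξ ω - sInf {x : ℝ | α ≤ (P {ω' | ξ ω' ≤ x}).toReal}) 0) ∂P)
      ≤ ∫ ω, (y + (1 - α)⁻¹ * max (ξ ω - y) 0) ∂P := by
  have hξm : AEMeasurable ξ P := hξ.aestronglyMeasurable.aemeasurable
  have := Measure.isProbabilityMeasure_map hξm
  have hmap : ∀ s, MeasurableSet s → P.map ξ s = P (ξ ⁻¹' s) := fun s hs =>
    Measure.map_apply_of_aemeasurable hξm hs
  have hcdf : ∀ x, (P {ω | ξ ω ≤ x}).toReal = cdf (P.map ξ) x := fun x => by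
    rw [cdf_eq_real, measureReal_def, hmap _ measurableSet_Iic]; rfl
  have hobj : ∀ z, ∫ ω, (z + (1 - α)⁻¹ * max (ξ ω - z) 0) ∂P = cvarObjective (P.map ξ) α z :=
    fun z => (integral_map (f := fun x => z + (1 - α)⁻¹ * max (x - z) 0) hξm
      (Continuous.aestronglyMeasurable (by fun_prop))).symm
  have hint : Integrable id (P.map ξ) :=
    (integrable_map_measure measurable_id.aestronglyMeasurable hξm).mpr (hξ.integrable one_le_two)
  have hatom : ∀ x, P.map ξ {x} = 0 := fun x => by
    rw [hmap _ (measurableSet_singleton x)]; exact hatomless x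
  simp only [hcdf, hobj]
  exact cvarObjective_le_of_cdf_eq hint hα.2 (cdf_sInf_setOf_le_cdf_eq hatom hα)
end

section
/- Let f : ℝ × ℝ^m → ℝ satisfy: (i) f(ax, ay) = a·f(x,y) for all a > 0 and inf_y f(0,y) = 0; (ii) x ↦ f(x,y) is non-decreasing for each y; (iii) f(x₁+x₂, y₁+y₂) ≤ f(x₁,y₁) + f(x₂,y₂); (iv) for every a ∈ ℝ there is a bijection φ : ℝ^m → ℝ^m with f(x+a, y) = f(x, φ(y)) + a for all (x,y). Then ρ(ξ) := inf_{y ∈ ℝ^m} E[f(ξ,y)] is a coherent risk measure on L²(Ω): it is positively homogeneous (ρ(a ξ) = a ρ(ξ) for a ≥ 0), monotone (ξ ≤ ξ' a.s. implies ρ(ξ) ≤ ρ(ξ')), subadditive (ρ(ξ₁+ξ₂) ≤ ρ(ξ₁)+ρ(ξ₂)), and translation-invariant (ρ(ξ+a) = ρ(ξ)+a for a ∈ ℝ). -/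
/-!
Each property of `f` passes to `y ↦ E[f(ξ, y)]` for every fixed `y`, by linearity and monotonicity
of the integral, and then to the infimum over `y`: homogeneity and translation through the
reparametrisations `y ↦ a • y` and `φ` of the index set (for `a = 0` homogeneity is the
normalisation `inf_y f(0, y) = 0`), subadditivity by choosing `y₁ + y₂`.
-/

open MeasureTheory

noncomputable def extremalRisk {Ω ι : Type*} [MeasurableSpace Ω] (P : Measure Ω)
    (f : ℝ → ι → ℝ) (ξ : Ω → ℝ) : ℝ :=
  ⨅ y, ∫ ω, f (ξ ω) y ∂P

section extremalRisk

variable {Ω ι : Type*} [MeasurableSpace Ω] {P : Measure Ω} {f : ℝ → ι → ℝ}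

theorem extremalRisk_const_mul_of_pos [MulAction ℝ ι] {a : ℝ} (ha : 0 < a)
    (hhom : ∀ (x : ℝ) (y : ι), f (a * x) (a • y) = a * f x y) (ξ : Ω → ℝ) :
    extremalRisk P f (fun ω => a * ξ ω) = a * extremalRisk P f ξ := by
  have hsurj : Function.Surjective fun y : ι => a • y := fun y =>
    ⟨a⁻¹ • y, smul_inv_smul₀ ha.ne' y⟩
  calc extremalRisk P f (fun ω => a * ξ ω)
      = ⨅ y, ∫ ω, f (a * ξ ω) (a • y) ∂P := (hsurj.iInf_comp _).symm
    _ = ⨅ y, a * ∫ ω, f (ξ ω) y ∂P := by simp only [hhom, integral_const_mul]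
    _ = a * extremalRisk P f ξ := (Real.mul_iInf_of_nonneg ha.le _).symm

theorem extremalRisk_const [IsProbabilityMeasure P] (c : ℝ) :
    extremalRisk P f (fun _ => c) = ⨅ y, f c y := by
  simp [extremalRisk]

theorem extremalRisk_const_mul_of_nonneg [MulAction ℝ ι] [IsProbabilityMeasure P]
    {a : ℝ} (ha : 0 ≤ a) (hhom : 0 < a → ∀ (x : ℝ) (y : ι), f (a * x) (a • y) = a * f x y)
    (hnorm : (⨅ y, f 0 y) = 0) (ξ : Ω → ℝ) :
    extremalRisk P f (fun ω => a * ξ ω) = a * extremalRisk P f ξ := by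
  rcases ha.eq_or_lt with rfl | ha
  · simp only [zero_mul, extremalRisk_const, hnorm]
  · exact extremalRisk_const_mul_of_pos ha (hhom ha) ξ

theorem extremalRisk_mono [Nonempty ι] {ξ ξ' : Ω → ℝ}
    (hbdd : BddBelow (Set.range fun y => ∫ ω, f (ξ ω) y ∂P))
    (hint : ∀ y, Integrable (fun ω => f (ξ ω) y) P)
    (hint' : ∀ y, Integrable (fun ω => f (ξ' ω) y) P)
    (hmono : ∀ y, Monotone fun x => f x y) (hle : ξ ≤ᵐ[P] ξ') :
    extremalRisk P f ξ ≤ extremalRisk P f ξ' :=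
  le_ciInf fun y => (ciInf_le hbdd y).trans <|
    integral_mono_ae (hint y) (hint' y) (hle.mono fun _ h => hmono y h)

theorem extremalRisk_add_le [Nonempty ι] [Add ι] {ξ₁ ξ₂ : Ω → ℝ}
    (hbdd : BddBelow (Set.range fun y => ∫ ω, f (ξ₁ ω + ξ₂ ω) y ∂P))
    (hint : ∀ y, Integrable (fun ω => f (ξ₁ ω + ξ₂ ω) y) P)
    (hint₁ : ∀ y, Integrable (fun ω => f (ξ₁ ω) y) P)
    (hint₂ : ∀ y, Integrable (fun ω => f (ξ₂ ω) y) P)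
    (hsub : ∀ (x₁ x₂ : ℝ) (y₁ y₂ : ι), f (x₁ + x₂) (y₁ + y₂) ≤ f x₁ y₁ + f x₂ y₂) :
    extremalRisk P f (fun ω => ξ₁ ω + ξ₂ ω) ≤ extremalRisk P f ξ₁ + extremalRisk P f ξ₂ :=
  le_ciInf_add_ciInf fun y₁ y₂ => (ciInf_le hbdd (y₁ + y₂)).trans <| by
    rw [← integral_add (hint₁ y₁) (hint₂ y₂)]
    exact integral_mono (hint _) ((hint₁ y₁).add (hint₂ y₂)) fun ω => hsub _ _ y₁ y₂

theorem extremalRisk_add_const [Nonempty ι] [IsProbabilityMeasure P] {ξ : Ω → ℝ} {a : ℝ}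
    (hbdd : BddBelow (Set.range fun y => ∫ ω, f (ξ ω) y ∂P))
    (hint : ∀ y, Integrable (fun ω => f (ξ ω) y) P)
    (φ : ι ≃ ι) (hφ : ∀ (x : ℝ) (y : ι), f (x + a) y = f x (φ y) + a) :
    extremalRisk P f (fun ω => ξ ω + a) = extremalRisk P f ξ + a := by
  have hshift (y : ι) : ∫ ω, f (ξ ω + a) y ∂P = ∫ ω, f (ξ ω) (φ y) ∂P + a := by
    simp only [hφ, integral_add (hint (φ y)) (integrable_const a), integral_const,
      probReal_univ, one_smul]
  calc extremalRisk P f (fun ω => ξ ω + a)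
      = ⨅ y, (∫ ω, f (ξ ω) (φ y) ∂P + a) := by simp only [extremalRisk, hshift]
    _ = ⨅ y, (∫ ω, f (ξ ω) y ∂P + a) := φ.surjective.iInf_comp fun y => ∫ ω, f (ξ ω) y ∂P + a
    _ = extremalRisk P f ξ + a := ((OrderIso.addRight a).map_ciInf hbdd).symm

end extremalRisk

/-- Coherence of extremal risk measures: under positive-homogeneity/normalization,
monotonicity, sub-additivity and a translation property of `f`, the extremal risk measure
`ρ(ξ) = inf_y E[f(ξ, y)]` is coherent on L²(Ω). -/
theorem stmt_3 {Ω : Type*} [MeasurableSpace Ω] (P : Measure Ω) [IsProbabilityMeasure P]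
    (m : ℕ) (f : ℝ → (Fin m → ℝ) → ℝ)
    -- finiteness of expectations and of the infimum for square-integrable variables
    (hint : ∀ (ξ : Ω → ℝ), MemLp ξ 2 P → ∀ y : Fin m → ℝ,
      Integrable (fun ω => f (ξ ω) y) P)
    (hbdd : ∀ (ξ : Ω → ℝ), MemLp ξ 2 P →
      BddBelow (Set.range fun y : Fin m → ℝ => ∫ ω, f (ξ ω) y ∂P))
    -- (i) positive-homogeneity and normalization
    (hhom : ∀ a : ℝ, 0 < a → ∀ (x : ℝ) (y : Fin m → ℝ), f (a * x) (a • y) = a * f x y)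
    (hnorm : (⨅ y : Fin m → ℝ, f 0 y) = 0)
    -- (ii) monotonicity
    (hmono : ∀ y : Fin m → ℝ, Monotone fun x => f x y)
    -- (iii) sub-additivity
    (hsub : ∀ (x₁ x₂ : ℝ) (y₁ y₂ : Fin m → ℝ),
      f (x₁ + x₂) (y₁ + y₂) ≤ f x₁ y₁ + f x₂ y₂)
    -- (iv) translation
    (htrans : ∀ a : ℝ, ∃ φ : (Fin m → ℝ) ≃ (Fin m → ℝ),
      ∀ (x : ℝ) (y : Fin m → ℝ), f (x + a) y = f x (φ y) + a) :
    -- ρ is a coherent risk measure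
    (∀ (a : ℝ), 0 ≤ a → ∀ (ξ : Ω → ℝ), MemLp ξ 2 P →
      (⨅ y : Fin m → ℝ, ∫ ω, f (a * ξ ω) y ∂P)
        = a * ⨅ y : Fin m → ℝ, ∫ ω, f (ξ ω) y ∂P) ∧
    (∀ (ξ ξ' : Ω → ℝ), MemLp ξ 2 P → MemLp ξ' 2 P → (∀ᵐ ω ∂P, ξ ω ≤ ξ' ω) →
      (⨅ y : Fin m → ℝ, ∫ ω, f (ξ ω) y ∂P)
        ≤ ⨅ y : Fin m → ℝ, ∫ ω, f (ξ' ω) y ∂P) ∧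
    (∀ (ξ₁ ξ₂ : Ω → ℝ), MemLp ξ₁ 2 P → MemLp ξ₂ 2 P →
      (⨅ y : Fin m → ℝ, ∫ ω, f (ξ₁ ω + ξ₂ ω) y ∂P)
        ≤ (⨅ y : Fin m → ℝ, ∫ ω, f (ξ₁ ω) y ∂P)
          + ⨅ y : Fin m → ℝ, ∫ ω, f (ξ₂ ω) y ∂P) ∧
    (∀ (a : ℝ) (ξ : Ω → ℝ), MemLp ξ 2 P →
      (⨅ y : Fin m → ℝ, ∫ ω, f (ξ ω + a) y ∂P)
        = (⨅ y : Fin m → ℝ, ∫ ω, f (ξ ω) y ∂P) + a) := by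
  refine ⟨fun a ha ξ _ => ?_, fun ξ ξ' hξ hξ' hle => ?_, fun ξ₁ ξ₂ hξ₁ hξ₂ => ?_,
    fun a ξ hξ => ?_⟩
  · exact extremalRisk_const_mul_of_nonneg ha (hhom a) hnorm ξ
  · exact extremalRisk_mono (hbdd ξ hξ) (hint ξ hξ) (hint ξ' hξ') hmono hle
  · have hsum : MemLp (fun ω => ξ₁ ω + ξ₂ ω) 2 P := hξ₁.add hξ₂
    exact extremalRisk_add_le (hbdd _ hsum) (hint _ hsum) (hint ξ₁ hξ₁) (hint ξ₂ hξ₂) hsub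
  · obtain ⟨φ, hφ⟩ := htrans a
    exact extremalRisk_add_const (hbdd ξ hξ) (hint ξ hξ) φ hφ
end

section
/- Differentiability of the outer value function: under the assumptions that y ↦ f(x,y) is uniformly M-semiconcave and differentiable in y, that V(y) := inf_{A ∈ 𝒜} E[f(g(X^A_T), y)] is convex and finite, and that for fixed y there exists an optimal control A with V(y) = E[f(g(X^A_T), y)], the function V is differentiable at y with gradient ∇V(y) = E[D_y f(g(X^A_T), y)]. -/
/-!
Along the optimal control `A` for `y`, integrating the semiconcavity inequality and using
`V ≤ E[f(g(X^A_T), ·)]` bounds `V` from above by a paraboloid touching it at `y` with slope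
`p = E[D_y f(g(X^A_T), y)]`. Convexity of `V` reflects this upper bound through `y` into a lower
bound `V (y + ξ) ≥ 2 V y - V (y - ξ)` with the same slope, so `V (y + ξ) - V y - ⟪ξ, p⟫ = O(‖ξ‖²)`.
-/

open MeasureTheory
open scoped RealInnerProductSpace

section

variable {E : Type*} [NormedAddCommGroup E] [InnerProductSpace ℝ E]

theorem integral_le_integral_add_inner_integral_add [CompleteSpace E] {Ω : Type*}
    [MeasurableSpace Ω] {P : Measure Ω} [IsProbabilityMeasure P] {u v : Ω → ℝ} {D : Ω → E}
    {ξ : E} {c : ℝ} (hu : Integrable u P) (hv : Integrable v P) (hD : Integrable D P)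
    (h : ∀ᵐ ω ∂P, u ω ≤ v ω + ⟪ξ, D ω⟫ + c) :
    ∫ ω, u ω ∂P ≤ ∫ ω, v ω ∂P + ⟪ξ, ∫ ω, D ω ∂P⟫ + c := by
  have hvD : Integrable (fun ω => v ω + ⟪ξ, D ω⟫) P := hv.add (hD.const_inner ξ)
  calc ∫ ω, u ω ∂P ≤ ∫ ω, (v ω + ⟪ξ, D ω⟫ + c) ∂P :=
        integral_mono_ae hu (hvD.add (integrable_const c)) h
    _ = ∫ ω, v ω ∂P + ⟪ξ, ∫ ω, D ω ∂P⟫ + c := by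
        rw [integral_add hvD (integrable_const c), integral_add hv (hD.const_inner ξ),
          integral_inner hD, integral_const, probReal_univ, one_smul]

theorem ConvexOn.abs_sub_sub_inner_le_of_le {V : E → ℝ} (hV : ConvexOn ℝ Set.univ V)
    {y p : E} {C : ℝ} (hupper : ∀ ξ, V (y + ξ) ≤ V y + ⟪ξ, p⟫ + C * ‖ξ‖ ^ 2) (ξ : E) :
    |V (y + ξ) - V y - ⟪ξ, p⟫| ≤ C * ‖ξ‖ ^ 2 := by
  have hmid : V y ≤ (1 / 2 : ℝ) * V (y + ξ) + (1 / 2 : ℝ) * V (y - ξ) := by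
    have := hV.2 (Set.mem_univ (y + ξ)) (Set.mem_univ (y - ξ)) (by norm_num : (0 : ℝ) ≤ 1 / 2)
      (by norm_num : (0 : ℝ) ≤ 1 / 2) (by norm_num)
    rwa [show (1 / 2 : ℝ) • (y + ξ) + (1 / 2 : ℝ) • (y - ξ) = y by module] at this
  have hreflect := hupper (-ξ)
  rw [← sub_eq_add_neg, inner_neg_left, norm_neg] at hreflect
  rw [abs_le]
  constructor <;> linarith [hupper ξ]

theorem hasGradientAt_of_abs_sub_sub_inner_le [CompleteSpace E] {V : E → ℝ} {y p : E} {C : ℝ}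
    (h : ∀ ξ, |V (y + ξ) - V y - ⟪ξ, p⟫| ≤ C * ‖ξ‖ ^ 2) : HasGradientAt V p y := by
  rw [hasGradientAt_iff_isLittleO]
  have hO : (fun x => V x - V y - ⟪p, x - y⟫) =O[nhds y] fun x => ‖x - y‖ ^ 2 := by
    refine Asymptotics.IsBigO.of_bound C (Filter.Eventually.of_forall fun x => ?_)
    simpa [real_inner_comm] using h (x - y)
  exact hO.trans_isLittleO <| (Asymptotics.isLittleO_norm_pow_id one_lt_two).comp_tendsto
    (tendsto_sub_nhds_zero_iff.2 Filter.tendsto_id)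

end

theorem stmt_10_general {Ω : Type*} [MeasurableSpace Ω] (P : Measure Ω) [IsProbabilityMeasure P]
    {𝒜 : Type*} (n m : ℕ)
    (X : 𝒜 → Ω → (Fin n → ℝ)) (g : (Fin n → ℝ) → ℝ)
    (f : ℝ → EuclideanSpace ℝ (Fin m) → ℝ)
    (Df : ℝ → EuclideanSpace ℝ (Fin m) → EuclideanSpace ℝ (Fin m))
    (M : ℝ)
    (hsc : ∀ (x : ℝ) (y ξ : EuclideanSpace ℝ (Fin m)),
      f x (y + ξ) ≤ f x y + ⟪ξ, Df x y⟫ + M / 2 * ‖ξ‖ ^ 2)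
    (hint : ∀ (A : 𝒜) (y : EuclideanSpace ℝ (Fin m)),
      Integrable (fun ω => f (g (X A ω)) y) P)
    (hintD : ∀ (A : 𝒜) (y : EuclideanSpace ℝ (Fin m)),
      Integrable (fun ω => Df (g (X A ω)) y) P)
    (hbdd : ∀ y : EuclideanSpace ℝ (Fin m),
      BddBelow (Set.range fun A : 𝒜 => ∫ ω, f (g (X A ω)) y ∂P))
    (V : EuclideanSpace ℝ (Fin m) → ℝ)
    (hV : ∀ y, V y = ⨅ A : 𝒜, ∫ ω, f (g (X A ω)) y ∂P)
    (hconv : ConvexOn ℝ Set.univ V)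
    (y : EuclideanSpace ℝ (Fin m)) (A : 𝒜)
    (hopt : V y = ∫ ω, f (g (X A ω)) y ∂P) :
    HasGradientAt V (∫ ω, Df (g (X A ω)) y ∂P) y := by
  have hupper : ∀ ξ, V (y + ξ) ≤ V y + ⟪ξ, ∫ ω, Df (g (X A ω)) y ∂P⟫ + M / 2 * ‖ξ‖ ^ 2 :=
    fun ξ => calc
      V (y + ξ) ≤ ∫ ω, f (g (X A ω)) (y + ξ) ∂P := (hV (y + ξ)).trans_le (ciInf_le (hbdd _) A)
      _ ≤ _ := hopt ▸ integral_le_integral_add_inner_integral_add (hint A (y + ξ)) (hint A y)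
          (hintD A y) (ae_of_all P fun ω => hsc _ _ _)
  exact hasGradientAt_of_abs_sub_sub_inner_le (hconv.abs_sub_sub_inner_le_of_le hupper)

/-- Differentiability of the outer value function: under uniform semiconcavity of `f` in `y`,
convexity of `V`, and existence of an optimal control at `y`, the value function `V` is
differentiable at `y` with gradient `E[D_y f(g(X^A_T), y)]`. -/
theorem stmt_10 {Ω : Type*} [MeasurableSpace Ω] (P : Measure Ω) [IsProbabilityMeasure P]
    {𝒜 : Type*} [Nonempty 𝒜] (n m : ℕ)
    (X : 𝒜 → Ω → (Fin n → ℝ)) (g : (Fin n → ℝ) → ℝ)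
    (f : ℝ → EuclideanSpace ℝ (Fin m) → ℝ)
    (Df : ℝ → EuclideanSpace ℝ (Fin m) → EuclideanSpace ℝ (Fin m))
    (hdiff : ∀ (x : ℝ) (y : EuclideanSpace ℝ (Fin m)), HasGradientAt (f x) (Df x y) y)
    (M : ℝ) (hM : 0 < M)
    (hsc : ∀ (x : ℝ) (y ξ : EuclideanSpace ℝ (Fin m)),
      f x (y + ξ) ≤ f x y + ⟪ξ, Df x y⟫ + M / 2 * ‖ξ‖ ^ 2)
    (hint : ∀ (A : 𝒜) (y : EuclideanSpace ℝ (Fin m)),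
      Integrable (fun ω => f (g (X A ω)) y) P)
    (hintD : ∀ (A : 𝒜) (y : EuclideanSpace ℝ (Fin m)),
      Integrable (fun ω => Df (g (X A ω)) y) P)
    (hbdd : ∀ y : EuclideanSpace ℝ (Fin m),
      BddBelow (Set.range fun A : 𝒜 => ∫ ω, f (g (X A ω)) y ∂P))
    (V : EuclideanSpace ℝ (Fin m) → ℝ)
    (hV : ∀ y, V y = ⨅ A : 𝒜, ∫ ω, f (g (X A ω)) y ∂P)
    (hconv : ConvexOn ℝ Set.univ V)
    (y : EuclideanSpace ℝ (Fin m)) (A : 𝒜)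
    (hopt : V y = ∫ ω, f (g (X A ω)) y ∂P) :
    HasGradientAt V (∫ ω, Df (g (X A ω)) y ∂P) y :=
  stmt_10_general P n m X g f Df M hsc hint hintD hbdd V hV hconv y A hopt
end

section
/- Explicit inf-convolution of the mean-CVaR integrand: let λ > 0, α ∈ (0,1), ε > 0, and define h(x,y) := −x + λ(y + (1−α)⁻¹(−x − y)⁺) (equal to f(g(x),y) with g(x) = −x). Then its inf-convolution in y, h_ε(x,y) := inf_{z ∈ ℝ}[h(x,z) + (y−z)²/(2ε)], equals: −x + λ(y − (x+y)/(1−α)) − (1/2)(αλ/(1−α))²ε when x+y < −αλε/(1−α); (y+x)²/(2ε) − (1+λ)x when −αλε/(1−α) ≤ x+y ≤ λε; and −x + λy − λ²ε/2 when x+y > λε. -/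
/-!
Substituting `u = x + z`, the integrand becomes `-(1 + λ) x + ψ (x + z)` with the kinked linear
function `ψ u = max (λ u) (b u)`, `b = -αλ/(1-α) < 0 < λ`. The inf-convolution of `ψ` with
`(y - z)² / (2ε)` is attained at `z₀ = y - c ε`, where `c` is a subgradient of `ψ` at `x + z₀`:
`c = b` left of the kink, `c = λ` right of it, and `c = (x + y)/ε ∈ [b, λ]` when `z₀` sits on
the kink. The three regimes of the theorem are these three cases.
-/

theorem iInf_add_sq_div_eq_of_subgradient {ψ : ℝ → ℝ} {c y ε : ℝ} (hε : 0 < ε)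
    (hψ : ∀ z, ψ (y - c * ε) + c * (z - (y - c * ε)) ≤ ψ z) :
    ⨅ z, ψ z + (y - z) ^ 2 / (2 * ε) = ψ (y - c * ε) + c ^ 2 * ε / 2 := by
  have hlower : ∀ z, ψ (y - c * ε) + c ^ 2 * ε / 2 ≤ ψ z + (y - z) ^ 2 / (2 * ε) := by
    intro z
    have hsq : c * (z - (y - c * ε)) + (y - z) ^ 2 / (2 * ε) - c ^ 2 * ε / 2
        = (y - z - c * ε) ^ 2 / (2 * ε) := by
      field_simp; ring
    have : 0 ≤ (y - z - c * ε) ^ 2 / (2 * ε) := by positivity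
    linarith [hψ z]
  have hattained : ψ (y - c * ε) + (y - (y - c * ε)) ^ 2 / (2 * ε)
      = ψ (y - c * ε) + c ^ 2 * ε / 2 := by
    field_simp; ring
  exact IsLeast.csInf_eq ⟨⟨y - c * ε, hattained⟩, Set.forall_mem_range.2 hlower⟩

theorem mul_le_max_mul_mul {a b c : ℝ} (hbc : b ≤ c) (hca : c ≤ a) (u : ℝ) :
    c * u ≤ max (a * u) (b * u) := by
  rcases le_total 0 u with hu | hu
  · exact (mul_le_mul_of_nonneg_right hca hu).trans (le_max_left _ _)
  · exact (mul_le_mul_of_nonpos_right hbc hu).trans (le_max_right _ _)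

theorem iInf_max_mul_mul_add_sq_div_eq {a b c d x y ε : ℝ} (hε : 0 < ε)
    (hbc : b ≤ c) (hca : c ≤ a)
    (hc : max (a * (x + (y - c * ε))) (b * (x + (y - c * ε))) = c * (x + (y - c * ε))) :
    ⨅ z, (d + max (a * (x + z)) (b * (x + z))) + (y - z) ^ 2 / (2 * ε)
      = d + c * (x + y) - c ^ 2 * ε / 2 := by
  rw [iInf_add_sq_div_eq_of_subgradient hε fun z => ?_, hc]
  · ring
  · rw [hc]
    linarith [mul_le_max_mul_mul hbc hca (x + z)]

theorem mul_add_mul_max_neg_zero {a k : ℝ} (hk : 0 ≤ k) (u : ℝ) :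
    a * u + k * max (-u) 0 = max (a * u) ((a - k) * u) := by
  rcases le_total 0 u with hu | hu
  · rw [max_eq_right (by linarith), max_eq_left (by nlinarith)]
    ring
  · rw [max_eq_left (by linarith), max_eq_right (by nlinarith)]
    ring

/-- Explicit inf-convolution of the mean-CVaR integrand
`h(x,y) = −x + λ(y + (1−α)⁻¹(−x − y)⁺)`. -/
theorem stmt_18 (lam α ε : ℝ) (hlam : 0 < lam) (hα : α ∈ Set.Ioo (0 : ℝ) 1) (hε : 0 < ε)
    (h : ℝ → ℝ → ℝ)
    (hh : ∀ x y : ℝ, h x y = -x + lam * (y + (1 - α)⁻¹ * max (-x - y) 0))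
    (hε' : ℝ → ℝ → ℝ)
    (hhε : ∀ x y : ℝ, hε' x y = ⨅ z : ℝ, h x z + (y - z) ^ 2 / (2 * ε)) :
    ∀ x y : ℝ,
      (x + y < -(α * lam * ε) / (1 - α) →
        hε' x y = -x + lam * (y - (x + y) / (1 - α)) - 1 / 2 * (α * lam / (1 - α)) ^ 2 * ε) ∧
      (-(α * lam * ε) / (1 - α) ≤ x + y ∧ x + y ≤ lam * ε →
        hε' x y = (y + x) ^ 2 / (2 * ε) - (1 + lam) * x) ∧
      (lam * ε < x + y →
        hε' x y = -x + lam * y - lam ^ 2 * ε / 2) := by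
  intro x y
  obtain ⟨hα0, hα1⟩ := hα
  have h1α : 0 < 1 - α := by linarith
  set b := -(α * lam) / (1 - α) with hb
  have hbε : b * ε = -(α * lam * ε) / (1 - α) := by ring
  have hb_lt_zero : b < 0 := div_neg_of_neg_of_pos (by nlinarith) h1α
  have hkink : h x = fun z => -(1 + lam) * x + max (lam * (x + z)) (b * (x + z)) := by
    funext z
    have hslope : b = lam - lam * (1 - α)⁻¹ := by rw [hb]; field_simp; ring
    rw [hh, hslope, ← mul_add_mul_max_neg_zero (by positivity), show -x - z = -(x + z) by ring]
    ring
  rw [hhε, hkink]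
  refine ⟨fun hs => ?_, fun ⟨hs₁, hs₂⟩ => ?_, fun hs => ?_⟩
  · rw [iInf_max_mul_mul_add_sq_div_eq hε le_rfl (by linarith) (max_eq_right (by nlinarith)), hb]
    field_simp
    ring
  · have hc : b ≤ (x + y) / ε := by rw [le_div_iff₀ hε]; linarith
    have hc' : (x + y) / ε ≤ lam := by rw [div_le_iff₀ hε]; linarith
    have hon_kink : x + (y - (x + y) / ε * ε) = 0 := by field_simp; ring
    rw [iInf_max_mul_mul_add_sq_div_eq hε hc hc' (by simp [hon_kink])]
    field_simp
    ring
  · rw [iInf_max_mul_mul_add_sq_div_eq hε (by linarith) le_rfl (max_eq_left (by nlinarith))]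
    ring
end
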